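/- arXiv:2604.24878 — 3 statements merged into one kernel-verified Lean document; each statement's English description precedes it below -/
import Mathlib

section
/- Let x ∈ ℝⁿ with n ≥ 2, and suppose x₁ > xᵢ for all i ≥ 2. Let x₂' := max_{2≤i≤n} xᵢ and let ε > 0. If λ ≥ (ln(n-1) - ln ε)/(x₁ - x₂'), then for every coordinate i, |Softmax_λ(x)ᵢ - (e₁)ᵢ| ≤ ε, where Softmax_λ(x)ᵢ = exp(λxᵢ)/∑ⱼ exp(λxⱼ) and e₁ is the first standard basis vector. -/
/-! If every other coordinate lies at least `x₁ - x₂'` below the first, then each of the `n - 1`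
other weights `exp (λ xⱼ)` is at most `exp (λ x₁) · exp (-λ (x₁ - x₂'))`, and the choice of `λ`
makes their total at most `ε · exp (λ x₁)`. A probability vector whose mass off one coordinate is
at most `ε` is within `ε` of the corresponding one-hot vector in every coordinate. For `ε ≥ 1`
there is nothing to prove, and this case has to be split off because `λ` may then be negative. -/

open Finset Real

section Normalize

variable {ι : Type*} [Fintype ι]

theorem div_sum_mem_Icc {w : ι → ℝ} (hw : ∀ j, 0 ≤ w j) (i : ι) :
    w i / ∑ j, w j ∈ Set.Icc 0 1 :=
  ⟨div_nonneg (hw i) (sum_nonneg fun j _ => hw j),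
    div_le_one_of_le₀ (single_le_sum (fun j _ => hw j) (mem_univ i))
      (sum_nonneg fun j _ => hw j)⟩

theorem abs_div_sum_sub_ite_le_one [DecidableEq ι] {w : ι → ℝ} (hw : ∀ j, 0 ≤ w j) (i₀ i : ι) :
    |w i / ∑ j, w j - if i = i₀ then 1 else 0| ≤ 1 := by
  obtain ⟨h0, h1⟩ := div_sum_mem_Icc hw i
  rw [abs_le]
  split_ifs <;> constructor <;> linarith

theorem abs_div_sum_sub_ite_le [DecidableEq ι] {w : ι → ℝ} {ε : ℝ} (hw : ∀ j, 0 ≤ w j) {i₀ : ι}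
    (hi₀ : 0 < w i₀) (hrest : ∑ j ∈ univ.erase i₀, w j ≤ ε * w i₀) (i : ι) :
    |w i / ∑ j, w j - if i = i₀ then 1 else 0| ≤ ε := by
  set R := ∑ j ∈ univ.erase i₀, w j
  have hR : 0 ≤ R := sum_nonneg fun j _ => hw j
  have hS : ∑ j, w j = w i₀ + R := (add_sum_erase _ _ (mem_univ i₀)).symm
  have hε : 0 ≤ ε := nonneg_of_mul_nonneg_left (hR.trans hrest) hi₀
  have hRS : R / ∑ j, w j ≤ ε :=
    div_le_of_le_mul₀ (by linarith) hε (by rw [hS]; nlinarith)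
  refine le_trans ?_ hRS
  split_ifs with hi
  · subst hi
    have hneg : w i / ∑ j, w j - 1 = -(R / ∑ j, w j) := by
      rw [hS]
      field_simp
      ring
    rw [hneg, abs_neg, abs_of_nonneg (div_nonneg hR (by linarith))]
  · rw [sub_zero, abs_of_nonneg (div_nonneg (hw i) (by linarith))]
    exact div_le_div_of_nonneg_right
      (single_le_sum (fun j _ => hw j) (mem_erase.2 ⟨hi, mem_univ i⟩)) (by linarith)

end Normalize

theorem mul_exp_le_mul_exp_of_div_le {a b c d lam : ℝ} (ha : 0 < a) (hb : 0 < b) (hcd : c < d)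
    (hlam : (log a - log b) / (d - c) ≤ lam) :
    a * exp (lam * c) ≤ b * exp (lam * d) := by
  rw [div_le_iff₀ (sub_pos.2 hcd)] at hlam
  calc a * exp (lam * c) = exp (log a + lam * c) := by rw [exp_add, exp_log ha]
    _ ≤ exp (log b + lam * d) := exp_le_exp.2 (by linarith)
    _ = b * exp (lam * d) := by rw [exp_add, exp_log hb]

/-- Finite-temperature softmax approximates hardmax: if `x 0` is the unique maximizer,
`x2` is the maximum of the remaining entries, and the inverse temperature `lam` is at
least `(ln(n-1) - ln ε)/(x 0 - x2)`, then every coordinate of the softmax differs from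
the one-hot vector `e₁` by at most `ε`. -/
theorem softmax_approx_hardmax
    (n : ℕ) (hn : 2 ≤ n) (x : Fin n → ℝ) (x2 ε lam : ℝ)
    (hε : 0 < ε)
    (hmax : ∀ i : Fin n, i ≠ ⟨0, by omega⟩ → x i < x ⟨0, by omega⟩)
    (hx2 : IsGreatest {y : ℝ | ∃ i : Fin n, i ≠ ⟨0, by omega⟩ ∧ x i = y} x2)
    (hlam : (Real.log (n - 1) - Real.log ε) / (x ⟨0, by omega⟩ - x2) ≤ lam) :
    ∀ i : Fin n,
      |Real.exp (lam * x i) / (∑ j : Fin n, Real.exp (lam * x j))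
        - (if i = ⟨0, by omega⟩ then (1 : ℝ) else 0)| ≤ ε := by
  set i₀ : Fin n := ⟨0, by omega⟩
  have hw : ∀ j, 0 ≤ exp (lam * x j) := fun j => (exp_pos _).le
  by_cases hε1 : 1 ≤ ε
  · exact fun i => (abs_div_sum_sub_ite_le_one hw i₀ i).trans hε1
  have hn1 : (1 : ℝ) ≤ n - 1 := by
    have : (2 : ℝ) ≤ n := by exact_mod_cast hn
    linarith
  have hgap : x2 < x i₀ := by
    obtain ⟨j, hj, rfl⟩ := hx2.1
    exact hmax j hj
  have hlog : 0 < log (n - 1) - log ε := by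
    linarith [log_nonneg hn1, log_neg hε (not_le.1 hε1)]
  have hlam0 : 0 ≤ lam := (div_pos hlog (sub_pos.2 hgap)).le.trans hlam
  refine abs_div_sum_sub_ite_le hw (exp_pos _) ?_
  calc ∑ j ∈ univ.erase i₀, exp (lam * x j)
      ≤ (univ.erase i₀).card • exp (lam * x2) :=
        sum_le_card_nsmul _ _ _ fun j hj => exp_le_exp.2 <|
          mul_le_mul_of_nonneg_left (hx2.2 ⟨j, ne_of_mem_erase hj, rfl⟩) hlam0
    _ = (n - 1) * exp (lam * x2) := by
        rw [card_erase_of_mem (mem_univ _), card_univ, Fintype.card_fin, nsmul_eq_mul,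
          Nat.cast_pred (by omega)]
    _ ≤ ε * exp (lam * x i₀) := mul_exp_le_mul_exp_of_div_le (by linarith) hε hgap hlam
end

section
/- Fix n ≥ 1, C_s > 0, ε ∈ (0,1), and λ ≥ ln(C_s·n/ε)/ε. Define ReLU_soft(s) := s · (n·e^{λs})/(n·e^{λs} + 1). Then for all s ∈ ℝ with |s| ≤ C_s, |max(s,0) - ReLU_soft(s)| ≤ 2ε. -/
/-- Soft-ReLU uniform approximation of ReLU on `[-C_s, C_s]` when the inverse
temperature `lam` is at least `ln(C_s·n/ε)/ε`. -/
theorem softrelu_approx_relu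
    (n : ℕ) (hn : 1 ≤ n) (Cs ε lam : ℝ)
    (hCs : 0 < Cs) (hε0 : 0 < ε) (hε1 : ε < 1)
    (hlam : Real.log (Cs * n / ε) / ε ≤ lam) :
    ∀ s : ℝ, |s| ≤ Cs →
      |max s 0 - s * ((n * Real.exp (lam * s)) / (n * Real.exp (lam * s) + 1))| ≤ 2 * ε := by
  intro s hs
  have hn1 : (1:ℝ) ≤ (n:ℝ) := by exact_mod_cast hn
  have hn0 : (0:ℝ) < n := by linarith
  set E : ℝ := (n:ℝ) * Real.exp (lam * s) with hE
  have hEpos : 0 < E := by positivity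
  have hden : 0 < E + 1 := by linarith
  have hσ0 : 0 ≤ E / (E + 1) := by positivity
  have hσ1 : E / (E + 1) ≤ 1 := by rw [div_le_one hden]; linarith
  have hlog : Real.log (Cs * n / ε) ≤ lam * ε := by
    rw [div_le_iff₀ hε0] at hlam; linarith
  have hsCs : s ≤ Cs := le_trans (le_abs_self s) hs
  have hnsCs : -s ≤ Cs := le_trans (neg_le_abs s) hs
  -- key fact for the large |s| cases
  have hbig : 1 < Cs * n / ε → Cs * n / ε ≤ Real.exp (lam * ε) ∧ 0 < lam := by
    intro h
    have hlogpos : 0 < Real.log (Cs * n / ε) := Real.log_pos h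
    have hlam0 : 0 < lam := by nlinarith
    constructor
    · calc Cs * n / ε = Real.exp (Real.log (Cs * n / ε)) :=
            (Real.exp_log (by positivity)).symm
        _ ≤ Real.exp (lam * ε) := Real.exp_le_exp.mpr hlog
    · exact hlam0
  rcases le_or_gt s 0 with hsneg | hspos
  · rw [max_eq_right hsneg]
    have heq : 0 - s * (E / (E + 1)) = (-s) * (E / (E + 1)) := by ring
    rw [heq, abs_of_nonneg (mul_nonneg (by linarith) hσ0)]
    rcases le_or_gt (-s) ε with hsmall | hlarge
    · nlinarith [mul_le_of_le_one_right (neg_nonneg.2 hsneg) hσ1]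
    · have hεCs : ε < Cs := lt_of_lt_of_le hlarge hnsCs
      have h1 : 1 < Cs * n / ε := by
        rw [lt_div_iff₀ hε0]; nlinarith
      obtain ⟨hexp, hlam0⟩ := hbig h1
      -- (-s) * σ ≤ Cs * E ≤ Cs * n * exp(-lam*ε) ≤ ε
      have hσE : E / (E + 1) ≤ E := by
        rw [div_le_iff₀ hden]; nlinarith
      have h2 : (-s) * (E / (E + 1)) ≤ Cs * E :=
        mul_le_mul hnsCs hσE hσ0 hCs.le
      have h3 : Real.exp (lam * s) ≤ Real.exp (-(lam * ε)) := by
        apply Real.exp_le_exp.mpr; nlinarith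
      have h4 : Real.exp (-(lam * ε)) ≤ ε / (Cs * n) := by
        rw [Real.exp_neg]
        rw [inv_le_comm₀ (Real.exp_pos _) (by positivity)]
        calc (ε / (Cs * n))⁻¹ = Cs * n / ε := by field_simp
          _ ≤ Real.exp (lam * ε) := hexp
      have h5 : Cs * E ≤ ε := by
        have : Cs * E ≤ Cs * ((n:ℝ) * (ε / (Cs * n))) := by
          apply mul_le_mul_of_nonneg_left _ hCs.le
          exact mul_le_mul_of_nonneg_left (h3.trans h4) hn0.le
        calc Cs * E ≤ Cs * ((n:ℝ) * (ε / (Cs * n))) := this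
          _ = ε := by field_simp
      linarith
  · rw [max_eq_left hspos.le]
    have heq : s - s * (E / (E + 1)) = s / (E + 1) := by
      field_simp; ring
    rw [heq, abs_of_nonneg (by positivity)]
    rcases le_or_gt s ε with hsmall | hlarge
    · have : s / (E + 1) ≤ s := by
        rw [div_le_iff₀ hden]; nlinarith
      linarith
    · have hεCs : ε < Cs := lt_of_lt_of_le hlarge hsCs
      have h1 : 1 < Cs * n / ε := by
        rw [lt_div_iff₀ hε0]; nlinarith
      obtain ⟨hexp, hlam0⟩ := hbig h1
      have hE1 : Cs / ε ≤ E + 1 := by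
        have h2 : Real.exp (lam * ε) ≤ Real.exp (lam * s) := by
          exact Real.exp_le_exp.mpr (mul_le_mul_of_nonneg_left hlarge.le hlam0.le)
        have h3 : Cs * n / ε ≤ E := by
          calc Cs * n / ε ≤ Real.exp (lam * ε) := hexp
            _ ≤ Real.exp (lam * s) := h2
            _ ≤ E := le_mul_of_one_le_left (Real.exp_pos _).le hn1
        have h4 : Cs / ε ≤ Cs * n / ε :=
          (div_le_div_iff_of_pos_right hε0).mpr (le_mul_of_one_le_right hCs.le hn1)
        linarith
      have : s / (E + 1) ≤ Cs / (Cs / ε) := by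
        apply div_le_div₀ hCs.le hsCs (by positivity) hE1
      have heq2 : Cs / (Cs / ε) = ε := by field_simp
      linarith [heq2 ▸ this]
end

section
/- Let s, ŝ ∈ ℝ with |ŝ - s| ≤ δ, both bounded in absolute value by C_s, and let λ ≥ ln(C_s·n/ε)/ε for ε ∈ (0,1) and n ≥ 1. Then |ReLU_soft(ŝ) - ReLU(s)| ≤ 2ε + δ, where ReLU_soft(u) = u·(n·e^{λu})/(n·e^{λu}+1). -/
/-!
Write the soft-ReLU as `u * (t / (t + 1))` with `t = n * exp (λ u)`. On `|u| ≤ ε` it is within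
`|u| ≤ ε` of `ReLU u` because the gate `t / (t + 1)` lies in `[0, 1]`. For `ε < |u| ≤ C_s` the choice of
`λ` gives `C_s n ≤ ε exp (λ ε)`, which makes the gate exponentially close to `1` (for `u > ε`) or to `0`
(for `u < -ε`) with an error at most `ε`. The perturbation from `s` to `ŝ` costs at most `δ` because
`ReLU` is `1`-Lipschitz.
-/

open Real

lemma abs_mul_sub_max_le_abs {u g : ℝ} (hg0 : 0 ≤ g) (hg1 : g ≤ 1) :
    |u * g - max u 0| ≤ |u| := by
  rcases le_total 0 u with hu | hu
  · rw [max_eq_left hu, abs_of_nonneg hu, abs_le]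
    constructor <;> nlinarith
  · rw [max_eq_right hu, sub_zero, abs_mul, abs_of_nonneg hg0]
    exact mul_le_of_le_one_right (abs_nonneg u) hg1

lemma abs_mul_div_add_one_sub_max_le_of_nonneg {u t : ℝ} (hu : 0 ≤ u) (ht : 0 < t) :
    |u * (t / (t + 1)) - max u 0| ≤ u / t := by
  have hsub : u * (t / (t + 1)) - u = -(u / (t + 1)) := by
    field_simp
    ring
  rw [max_eq_left hu, hsub, abs_neg, abs_of_nonneg (by positivity)]
  exact div_le_div_of_nonneg_left hu ht (by linarith)

lemma abs_mul_div_add_one_sub_max_le_of_nonpos {u t : ℝ} (hu : u ≤ 0) (ht : 0 ≤ t) :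
    |u * (t / (t + 1)) - max u 0| ≤ |u| * t := by
  have ht1 : 0 ≤ t + 1 := by linarith
  rw [max_eq_right hu, sub_zero, abs_mul, abs_of_nonneg (div_nonneg ht ht1)]
  gcongr
  exact div_le_self ht (by linarith : (1 : ℝ) ≤ t + 1)

lemma le_exp_mul_of_log_div_le {x ε lam : ℝ} (hx : 0 < x) (hε : 0 < ε)
    (hlam : log x / ε ≤ lam) : x ≤ exp (lam * ε) :=
  (log_le_iff_le_exp hx).mp ((div_le_iff₀ hε).mp hlam)

lemma abs_softReLU_sub_max_le {n : ℕ} (hn : 1 ≤ n) {Cs ε lam u : ℝ} (hε : 0 < ε)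
    (hu : |u| ≤ Cs) (hlam : log (Cs * n / ε) / ε ≤ lam) :
    |u * (n * exp (lam * u) / (n * exp (lam * u) + 1)) - max u 0| ≤ ε := by
  have hn1 : (1 : ℝ) ≤ n := by exact_mod_cast hn
  have ht : 0 < (n : ℝ) * exp (lam * u) := by positivity
  rcases le_or_gt |u| ε with hsmall | hlarge
  · have hgate : n * exp (lam * u) / (n * exp (lam * u) + 1) ≤ 1 :=
      div_le_one_of_le₀ (by linarith) (by linarith)
    exact (abs_mul_sub_max_le_abs (by positivity) hgate).trans hsmall
  have hεCs : ε < Cs := hlarge.trans_le hu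
  have hratio : 1 < Cs * n / ε := by
    rw [lt_div_iff₀ hε]
    nlinarith
  have hexp := le_exp_mul_of_log_div_le (by linarith) hε hlam
  have hkey : Cs * n ≤ ε * exp (lam * ε) := by
    rw [div_le_iff₀ hε] at hexp
    linarith
  have hlam0 : 0 < lam :=
    pos_of_mul_pos_left (one_lt_exp_iff.mp (hratio.trans_le hexp)) hε.le
  rcases le_total 0 u with hpos | hneg
  · have hεu : ε < u := by rwa [abs_of_nonneg hpos] at hlarge
    have hmono : exp (lam * ε) ≤ exp (lam * u) := by gcongr
    refine (abs_mul_div_add_one_sub_max_le_of_nonneg hpos ht).trans ((div_le_iff₀ ht).mpr ?_)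
    calc u ≤ Cs * n := by nlinarith [abs_of_nonneg hpos]
      _ ≤ ε * exp (lam * u) := hkey.trans (by gcongr)
      _ ≤ ε * (n * exp (lam * u)) := by gcongr; nlinarith [exp_pos (lam * u)]
  · have huε : u < -ε := by rw [abs_of_nonpos hneg] at hlarge; linarith
    have hdecay : exp (lam * u) * exp (lam * ε) ≤ 1 := by
      rw [← exp_add, exp_le_one_iff]
      nlinarith
    refine (abs_mul_div_add_one_sub_max_le_of_nonpos hneg ht.le).trans ?_
    calc |u| * (n * exp (lam * u)) ≤ Cs * n * exp (lam * u) := by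
          rw [← mul_assoc]; gcongr
      _ ≤ ε * exp (lam * ε) * exp (lam * u) := by gcongr
      _ ≤ ε := by nlinarith [exp_pos (lam * ε)]

theorem softrelu_perturbed_approx_general
    (n : ℕ) (hn : 1 ≤ n) (Cs ε lam δ s shat : ℝ)
    (hε0 : 0 < ε)
    (hδ : |shat - s| ≤ δ)
    (hshat : |shat| ≤ Cs)
    (hlam : Real.log (Cs * n / ε) / ε ≤ lam) :
    |shat * ((n * Real.exp (lam * shat)) / (n * Real.exp (lam * shat) + 1)) - max s 0|
      ≤ 2 * ε + δ := by
  have hsoft := abs_softReLU_sub_max_le hn hε0 hshat hlam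
  have hlip : |max shat 0 - max s 0| ≤ |shat - s| := abs_max_sub_max_le_abs _ _ _
  have htri := abs_sub_le (shat * ((n * exp (lam * shat)) / (n * exp (lam * shat) + 1)))
    (max shat 0) (max s 0)
  linarith

/-- Combined soft-ReLU error: if `|shat - s| ≤ δ`, both are bounded by `C_s`, and
`λ ≥ ln(C_s·n/ε)/ε`, then `|ReLU_soft(shat) - ReLU(s)| ≤ 2ε + δ`. -/
theorem softrelu_perturbed_approx
    (n : ℕ) (hn : 1 ≤ n) (Cs ε lam δ s shat : ℝ)
    (hCs : 0 < Cs) (hε0 : 0 < ε) (hε1 : ε < 1)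
    (hδ : |shat - s| ≤ δ)
    (hs : |s| ≤ Cs) (hshat : |shat| ≤ Cs)
    (hlam : Real.log (Cs * n / ε) / ε ≤ lam) :
    |shat * ((n * Real.exp (lam * shat)) / (n * Real.exp (lam * shat) + 1)) - max s 0|
      ≤ 2 * ε + δ :=
  softrelu_perturbed_approx_general n hn Cs ε lam δ s shat hε0 hδ hshat hlam
end
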